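/- Let g ∈ L¹(ℝ₊) ∩ L²(ℝ₊) and let K be the Volterra convolution operator (K f)(t) = ∫₀ᵗ g(t − τ) f(τ) dτ. Then for every ℓ ∈ ℕ, the Galerkin matrix of K in the Laguerre basis, i.e. the (ℓ+1)×(ℓ+1) matrix with entries (K^ℓ)_{i,j} = ⟨K φ_j, φ_i⟩ = ∫₀^∞ (K φ_j)(t) φ_i(t) dt for 0 ≤ i, j ≤ ℓ, is lower triangular and Toeplitz: (K^ℓ)_{i,j} = 0 when i < j, and (K^ℓ)_{i,j} = ǧ̇_{i−j} when i ≥ j, where ǧ̇_0 = ǧ_0 and ǧ̇_m = ǧ_m − ǧ_{m−1} for m ≥ 1, with ǧ_k = ∫₀^∞ g(t) φ_k(t) dt the Laguerre coefficients of g. -/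

import Mathlib

open MeasureTheory Real

/-- The Laguerre polynomial `L_ℓ(t) = ∑_{j=0}^ℓ (-1)^j (ℓ choose j) t^j / j!`. -/
noncomputable def laguerrePoly (ℓ : ℕ) (t : ℝ) : ℝ :=
  ∑ j ∈ Finset.range (ℓ + 1), (-1 : ℝ) ^ j * (ℓ.choose j) * t ^ j / (j.factorial)

/-- The Laguerre function with parameter `a = 1/2`: `φ_ℓ(t) = e^{-t/2} L_ℓ(t)`. -/
noncomputable def laguerreFun' (ℓ : ℕ) (t : ℝ) : ℝ :=
  Real.exp (-(t / 2)) * laguerrePoly ℓ t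

/-- The Laguerre coefficients of a function `h` on `ℝ₊`: `ȟ_k = ∫₀^∞ h φ_k`. -/
noncomputable def laguerreCoef (h : ℝ → ℝ) (k : ℕ) : ℝ :=
  ∫ t in Set.Ioi (0:ℝ), h t * laguerreFun' k t

/-- The sequence `ǧ̇`: `ǧ̇_0 = ǧ_0` and `ǧ̇_m = ǧ_m − ǧ_{m−1}` for `m ≥ 1`. -/
noncomputable def laguerreCoefDot (g : ℝ → ℝ) : ℕ → ℝ
  | 0 => laguerreCoef g 0
  | (m + 1) => laguerreCoef g (m + 1) - laguerreCoef g m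

/-!
Write `ψ_m` for `laguerreFunDot m`, so that `ψ_0 = φ_0`, `ψ_{m+1} = φ_{m+1} - φ_m` and
`∫ g ψ_m = ǧ̇_m`. Substituting `t = σ + τ` and applying Fubini,
`⟨K φ_j, φ_i⟩ = ∫₀^∞ g(σ) c_{ij}(σ) dσ` with the correlation
`c_{ij}(σ) = ∫₀^∞ φ_j(τ) φ_i(σ + τ) dτ`, so it suffices to show `c_{ij} = ψ_{i-j}` for `i ≥ j`
and `c_{ij} = 0` for `i < j`. Pascal's rule gives `(L_{m+1} - L_m)' = -L_m`, i.e.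
`ψ_m' = ψ_m / 2 - φ_m`. Integrating the derivative of `τ ↦ ψ_a(τ) ψ_b(σ + τ)` over `(0, ∞)` then
yields `c_{m,0} = ψ_m` (for `a = 0`) and, because `ψ_{j+1}(0) = 0`, the shift rules
`c_{i+1,j+1} = c_{i,j}` and `c_{0,j+1} = 0` (for `a = j + 1`).
-/

open Finset Set Filter Topology Nat

lemma laguerrePoly_apply_zero (n : ℕ) : laguerrePoly n 0 = 1 := by
  simp [laguerrePoly, Finset.sum_range_succ']

lemma laguerrePoly_succ_sub (n : ℕ) (t : ℝ) :
    laguerrePoly (n + 1) t - laguerrePoly n t =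
      -∑ b ∈ range (n + 1), (-1 : ℝ) ^ b * n.choose b * t ^ (b + 1) / (b + 1)! := by
  have hn : laguerrePoly n t =
      ∑ b ∈ range (n + 2), (-1 : ℝ) ^ b * n.choose b * t ^ b / b ! := by
    rw [laguerrePoly, sum_range_succ _ (n + 1), choose_succ_self]
    simp
  rw [hn, laguerrePoly, ← sum_sub_distrib, sum_range_succ']
  simp only [choose_succ_succ', choose_zero_right, cast_add]
  rw [← sum_neg_distrib]
  norm_num
  rw [← sum_sub_distrib, ← sum_neg_distrib]
  exact Finset.sum_congr rfl fun b _ => by ring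

lemma hasDerivAt_laguerrePoly_succ_sub (n : ℕ) (t : ℝ) :
    HasDerivAt (fun x => laguerrePoly (n + 1) x - laguerrePoly n x) (-laguerrePoly n t) t := by
  simp_rw [laguerrePoly_succ_sub n]
  rw [laguerrePoly]
  refine (HasDerivAt.fun_sum fun b _ => ?_).fun_neg
  refine (((hasDerivAt_pow (b + 1) t).const_mul ((-1 : ℝ) ^ b * n.choose b)).div_const
    ((b + 1)! : ℝ)).congr_deriv ?_
  rw [factorial_succ, add_tsub_cancel_right]
  push_cast
  field_simp

noncomputable def laguerreFunDot : ℕ → ℝ → ℝ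
  | 0 => laguerreFun' 0
  | m + 1 => fun t => laguerreFun' (m + 1) t - laguerreFun' m t

lemma laguerreFunDot_zero : laguerreFunDot 0 = laguerreFun' 0 := rfl

lemma laguerreFunDot_succ (n : ℕ) (t : ℝ) :
    laguerreFunDot (n + 1) t = laguerreFun' (n + 1) t - laguerreFun' n t := rfl

lemma laguerreFun'_zero (t : ℝ) : laguerreFun' 0 t = exp (-(t / 2)) := by
  simp [laguerreFun', laguerrePoly]

lemma laguerreFunDot_succ_apply_zero (n : ℕ) : laguerreFunDot (n + 1) 0 = 0 := by
  simp [laguerreFunDot, laguerreFun', laguerrePoly_apply_zero]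

lemma continuous_laguerreFun' (n : ℕ) : Continuous (laguerreFun' n) := by
  unfold laguerreFun' laguerrePoly
  fun_prop

lemma hasDerivAt_laguerreFunDot (n : ℕ) (t : ℝ) :
    HasDerivAt (laguerreFunDot n) (laguerreFunDot n t / 2 - laguerreFun' n t) t := by
  have hexp : HasDerivAt (fun x => exp (-(x / 2))) (-exp (-(t / 2)) / 2) t := by
    refine (((hasDerivAt_id t).div_const 2).fun_neg.exp).congr_deriv ?_
    simp only [id]
    ring
  cases n with
  | zero =>
    rw [show laguerreFunDot 0 = fun x => exp (-(x / 2)) from funext laguerreFun'_zero]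
    refine hexp.congr_deriv ?_
    rw [laguerreFun'_zero]
    ring
  | succ n =>
    have h : laguerreFunDot (n + 1) =
        fun x => exp (-(x / 2)) * (laguerrePoly (n + 1) x - laguerrePoly n x) := by
      ext x
      simp only [laguerreFunDot, laguerreFun']
      ring
    rw [h]
    refine (hexp.mul (hasDerivAt_laguerrePoly_succ_sub n t)).congr_deriv ?_
    simp only [laguerreFun']
    ring

lemma abs_laguerrePoly_le (n : ℕ) {t : ℝ} (ht : 0 ≤ t) :
    |laguerrePoly n t| ≤ 5 ^ n * exp (t / 4) := by
  have hterm : ∀ b : ℕ, t ^ b / b ! ≤ 4 ^ b * exp (t / 4) := fun b => by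
    have h := pow_div_factorial_le_exp (t / 4) (by positivity) b
    rw [div_pow, div_div, mul_comm, ← div_div, div_le_iff₀ (by positivity)] at h
    linarith
  calc |laguerrePoly n t|
      ≤ ∑ b ∈ range (n + 1), (n.choose b : ℝ) * (t ^ b / b !) := by
        refine (abs_sum_le_sum_abs _ _).trans_eq (Finset.sum_congr rfl fun b _ => ?_)
        simp [abs_div, abs_of_nonneg ht, mul_div_assoc]
    _ ≤ ∑ b ∈ range (n + 1), (n.choose b : ℝ) * (4 ^ b * exp (t / 4)) := by
        gcongr with b
        exact hterm b
    _ = 5 ^ n * exp (t / 4) := by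
        rw [show (5 : ℝ) = 4 + 1 by norm_num, add_pow, Finset.sum_mul]
        exact Finset.sum_congr rfl fun b _ => by ring

lemma abs_laguerreFun'_le (n : ℕ) {t : ℝ} (ht : 0 ≤ t) :
    |laguerreFun' n t| ≤ 5 ^ n * exp (-(t / 4)) := by
  have h : exp (-(t / 2)) * exp (t / 4) = exp (-(t / 4)) := by
    rw [← exp_add]; ring_nf
  rw [laguerreFun', abs_mul, abs_exp, ← h]
  nlinarith [abs_laguerrePoly_le n ht, exp_pos (-(t / 2))]

-- `φ_n` is `e^{-t/2}` times a polynomial, so any rate below `1/2` would do.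
def ExpDecay (u : ℝ → ℝ) : Prop :=
  Continuous u ∧ ∃ C, ∀ t, 0 ≤ t → |u t| ≤ C * exp (-(t / 4))

namespace ExpDecay

variable {u v : ℝ → ℝ}

lemma add (hu : ExpDecay u) (hv : ExpDecay v) : ExpDecay fun t => u t + v t := by
  obtain ⟨⟨hu, Cu, hCu⟩, ⟨hv, Cv, hCv⟩⟩ := And.intro hu hv
  refine ⟨hu.add hv, Cu + Cv, fun t ht => ?_⟩
  linarith [abs_add_le (u t) (v t), hCu t ht, hCv t ht]

lemma sub (hu : ExpDecay u) (hv : ExpDecay v) : ExpDecay fun t => u t - v t := by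
  obtain ⟨⟨hu, Cu, hCu⟩, ⟨hv, Cv, hCv⟩⟩ := And.intro hu hv
  refine ⟨hu.sub hv, Cu + Cv, fun t ht => ?_⟩
  linarith [abs_sub (u t) (v t), hCu t ht, hCv t ht]

lemma div_const (hu : ExpDecay u) (c : ℝ) : ExpDecay fun t => u t / c := by
  obtain ⟨hu, C, hC⟩ := hu
  refine ⟨hu.div_const c, C / |c|, fun t ht => ?_⟩
  rw [abs_div, div_mul_eq_mul_div]
  exact div_le_div_of_nonneg_right (hC t ht) (abs_nonneg c)

lemma exists_abs_le (hu : ExpDecay u) : ∃ C, ∀ t, 0 ≤ t → |u t| ≤ C := by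
  obtain ⟨-, C, hC⟩ := hu
  refine ⟨C, fun t ht => (hC t ht).trans ?_⟩
  have hC0 : 0 ≤ C * exp (-(t / 4)) := (abs_nonneg _).trans (hC t ht)
  have hexp : exp (-(t / 4)) ≤ 1 := exp_le_one_iff.2 (by linarith)
  nlinarith [exp_pos (-(t / 4))]

lemma mul_comp_add (hu : ExpDecay u) (hv : ExpDecay v) {σ : ℝ} (hσ : 0 ≤ σ) :
    ExpDecay fun τ => u τ * v (σ + τ) := by
  obtain ⟨B, hB⟩ := hv.exists_abs_le
  obtain ⟨hu, C, hC⟩ := hu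
  refine ⟨hu.mul (hv.1.comp (continuous_const_add σ)), C * B, fun τ hτ => ?_⟩
  calc |u τ * v (σ + τ)| = |u τ| * |v (σ + τ)| := abs_mul _ _
    _ ≤ C * exp (-(τ / 4)) * B :=
        mul_le_mul (hC τ hτ) (hB _ (by linarith)) (abs_nonneg _) ((abs_nonneg _).trans (hC τ hτ))
    _ = C * B * exp (-(τ / 4)) := by ring

lemma tendsto_atTop (hu : ExpDecay u) : Tendsto u atTop (𝓝 0) := by
  obtain ⟨-, C, hC⟩ := hu
  have hexp : Tendsto (fun t : ℝ => C * exp (-(t / 4))) atTop (𝓝 0) := by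
    simpa using (tendsto_exp_atBot.comp (tendsto_neg_atTop_atBot.comp
      (tendsto_id.atTop_div_const (by norm_num : (0 : ℝ) < 4)))).const_mul C
  exact squeeze_zero_norm' ((eventually_ge_atTop 0).mono hC) hexp

lemma integrableOn (hu : ExpDecay u) : IntegrableOn u (Ioi 0) := by
  obtain ⟨hu, C, hC⟩ := hu
  refine Integrable.mono'
    ((exp_neg_integrableOn_Ioi 0 (by norm_num : (0 : ℝ) < 1 / 4)).const_mul C)
    hu.aestronglyMeasurable ?_
  filter_upwards [ae_restrict_mem measurableSet_Ioi] with t ht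
  rw [Real.norm_eq_abs, show -(1 / 4) * t = -(t / 4) by ring]
  exact hC t (le_of_lt ht)

lemma integrableOn_mul_left (hu : ExpDecay u) {g : ℝ → ℝ} (hg : IntegrableOn g (Ioi 0)) :
    IntegrableOn (fun t => g t * u t) (Ioi 0) := by
  obtain ⟨C, hC⟩ := hu.exists_abs_le
  refine hg.mul_bdd (c := C) hu.1.aestronglyMeasurable ?_
  filter_upwards [ae_restrict_mem measurableSet_Ioi] with t ht
  exact hC t (le_of_lt ht)

lemma integral_deriv_mul_comp_add {u' v' : ℝ → ℝ} (hu : ExpDecay u) (hu' : ExpDecay u')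
    (hv : ExpDecay v) (hv' : ExpDecay v') (hdu : ∀ t, HasDerivAt u (u' t) t)
    (hdv : ∀ t, HasDerivAt v (v' t) t) {σ : ℝ} (hσ : 0 ≤ σ) :
    ∫ τ in Ioi 0, (u' τ * v (σ + τ) + u τ * v' (σ + τ)) = -(u 0 * v σ) := by
  have h := integral_Ioi_of_hasDerivAt_of_tendsto' (f := fun τ => u τ * v (σ + τ))
    (fun τ _ => (hdu τ).mul ((hdv (σ + τ)).comp_const_add σ τ))
    ((hu'.mul_comp_add hv hσ).add (hu.mul_comp_add hv' hσ)).integrableOn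
    (hu.mul_comp_add hv hσ).tendsto_atTop
  simpa using h

end ExpDecay

lemma expDecay_laguerreFun' (n : ℕ) : ExpDecay (laguerreFun' n) :=
  ⟨continuous_laguerreFun' n, 5 ^ n, fun _ ht => abs_laguerreFun'_le n ht⟩

lemma expDecay_laguerreFunDot (n : ℕ) : ExpDecay (laguerreFunDot n) := by
  cases n with
  | zero => exact expDecay_laguerreFun' 0
  | succ n => exact (expDecay_laguerreFun' (n + 1)).sub (expDecay_laguerreFun' n)

lemma integral_deriv_laguerreFunDot_mul_comp_add (a b : ℕ) {σ : ℝ} (hσ : 0 ≤ σ) :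
    ∫ τ in Ioi 0, ((laguerreFunDot a τ / 2 - laguerreFun' a τ) * laguerreFunDot b (σ + τ) +
        laguerreFunDot a τ * (laguerreFunDot b (σ + τ) / 2 - laguerreFun' b (σ + τ))) =
      -(laguerreFunDot a 0 * laguerreFunDot b σ) :=
  ExpDecay.integral_deriv_mul_comp_add (expDecay_laguerreFunDot a)
    (((expDecay_laguerreFunDot a).div_const 2).sub (expDecay_laguerreFun' a))
    (expDecay_laguerreFunDot b)
    (((expDecay_laguerreFunDot b).div_const 2).sub (expDecay_laguerreFun' b))
    (hasDerivAt_laguerreFunDot a) (hasDerivAt_laguerreFunDot b) hσ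

lemma integral_laguerreFun'_zero_mul_comp_add (m : ℕ) {σ : ℝ} (hσ : 0 ≤ σ) :
    ∫ τ in Ioi 0, laguerreFun' 0 τ * laguerreFun' m (σ + τ) = laguerreFunDot m σ := by
  have h := integral_deriv_laguerreFunDot_mul_comp_add 0 m hσ
  rw [laguerreFunDot_zero] at h
  calc ∫ τ in Ioi 0, laguerreFun' 0 τ * laguerreFun' m (σ + τ)
      = -∫ τ in Ioi 0, ((laguerreFun' 0 τ / 2 - laguerreFun' 0 τ) * laguerreFunDot m (σ + τ) +
          laguerreFun' 0 τ * (laguerreFunDot m (σ + τ) / 2 - laguerreFun' m (σ + τ))) := by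
        rw [← integral_neg]
        congr 1 with τ
        ring
    _ = laguerreFunDot m σ := by rw [h, laguerreFun'_zero]; simp

lemma integral_laguerreFun'_succ_mul_comp_add (j i : ℕ) {σ : ℝ} (hσ : 0 ≤ σ) :
    ∫ τ in Ioi 0, laguerreFun' (j + 1) τ * laguerreFun' i (σ + τ) =
      (∫ τ in Ioi 0, laguerreFun' j τ * laguerreFun' i (σ + τ)) -
        ∫ τ in Ioi 0, laguerreFun' j τ * laguerreFunDot i (σ + τ) := by
  have h := integral_deriv_laguerreFunDot_mul_comp_add (j + 1) i hσ
  rw [laguerreFunDot_succ_apply_zero, zero_mul, neg_zero] at h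
  have hint : ∀ {u v : ℝ → ℝ}, ExpDecay u → ExpDecay v →
      Integrable (fun τ => u τ * v (σ + τ)) (volume.restrict (Ioi 0)) :=
    fun hu hv => (hu.mul_comp_add hv hσ).integrableOn
  have hjφ := hint (expDecay_laguerreFun' j) (expDecay_laguerreFun' i)
  have hj1φ := hint (expDecay_laguerreFun' (j + 1)) (expDecay_laguerreFun' i)
  have hjψ := hint (expDecay_laguerreFun' j) (expDecay_laguerreFunDot i)
  have hsum : ∫ τ in Ioi 0, (laguerreFun' j τ * laguerreFun' i (σ + τ) -
      laguerreFun' (j + 1) τ * laguerreFun' i (σ + τ) -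
      laguerreFun' j τ * laguerreFunDot i (σ + τ)) = 0 := by
    refine Eq.trans (setIntegral_congr_fun measurableSet_Ioi fun τ _ => ?_) h
    simp only [laguerreFunDot_succ]
    ring
  rw [integral_sub (hjφ.sub' hj1φ) hjψ, integral_sub hjφ hj1φ] at hsum
  linarith

lemma integral_laguerreFun'_mul_comp_add (i j : ℕ) {σ : ℝ} (hσ : 0 ≤ σ) :
    ∫ τ in Ioi 0, laguerreFun' j τ * laguerreFun' i (σ + τ) =
      if i < j then 0 else laguerreFunDot (i - j) σ := by
  induction j generalizing i with
  | zero => simpa using integral_laguerreFun'_zero_mul_comp_add i hσ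
  | succ j ih =>
    rw [integral_laguerreFun'_succ_mul_comp_add j i hσ]
    cases i with
    | zero => simp [laguerreFunDot_zero]
    | succ i =>
      have hφ := (expDecay_laguerreFun' j).mul_comp_add (expDecay_laguerreFun' (i + 1)) hσ
      have hφ' := (expDecay_laguerreFun' j).mul_comp_add (expDecay_laguerreFun' i) hσ
      simp only [laguerreFunDot_succ, mul_sub]
      rw [integral_sub hφ.integrableOn hφ'.integrableOn, sub_sub_cancel, ih i]
      simp

lemma setIntegral_Ioi_eq_integral_comp_add (k : ℝ → ℝ) (σ : ℝ) :
    ∫ t in Ioi σ, k t = ∫ τ in Ioi 0, k (σ + τ) := by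
  rw [← (measurePreserving_add_left volume σ).setIntegral_preimage_emb
    (measurableEmbedding_addLeft σ), preimage_const_add_Ioi, sub_self]

lemma integral_volterra_mul {g f h : ℝ → ℝ} {C : ℝ} (hg : IntegrableOn g (Ioi 0))
    (hf : Measurable f) (hfC : ∀ t, 0 ≤ t → |f t| ≤ C) (hh : IntegrableOn h (Ioi 0)) :
    ∫ t in Ioi 0, (∫ τ in 0..t, g (t - τ) * f τ) * h t =
      ∫ σ in Ioi 0, g σ * ∫ τ in Ioi 0, f τ * h (σ + τ) := by
  set F : ℝ × ℝ → ℝ := {p | p.2 < p.1}.indicator fun p => g p.2 * f (p.1 - p.2) * h p.1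
  have hinner : ∀ t ∈ Ioi (0 : ℝ),
      (∫ τ in 0..t, g (t - τ) * f τ) * h t = ∫ σ in Ioi 0, F (t, σ) := by
    intro t ht
    have hsub : ∫ τ in 0..t, g (t - τ) * f τ = ∫ σ in 0..t, g σ * f (t - σ) := by
      simpa using intervalIntegral.integral_comp_sub_left (a := 0) (b := t)
        (fun σ => g σ * f (t - σ)) t
    rw [hsub, intervalIntegral.integral_of_le (le_of_lt ht), integral_Ioc_eq_integral_Ioo,
      ← Ioi_inter_Iio, ← integral_mul_const, ← setIntegral_indicator measurableSet_Iio]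
    refine setIntegral_congr_fun measurableSet_Ioi fun σ _ => ?_
    simp [F, indicator_apply]
  have hF : Integrable F ((volume.restrict (Ioi 0)).prod (volume.restrict (Ioi 0))) := by
    refine ((hh.norm.mul_prod hg.norm).const_mul C).mono' ?_ ?_
    · refine AEStronglyMeasurable.indicator ?_ (measurableSet_lt measurable_snd measurable_fst)
      exact (hg.aestronglyMeasurable.comp_snd.mul
        (hf.comp (measurable_fst.sub measurable_snd)).aestronglyMeasurable).mul
        hh.aestronglyMeasurable.comp_fst
    · refine Eventually.of_forall fun p => ?_
      have hC : 0 ≤ C := (abs_nonneg _).trans (hfC 0 le_rfl)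
      simp only [F, indicator_apply, Real.norm_eq_abs]
      split_ifs with hp
      · have hfp := hfC _ (sub_nonneg.2 hp.le)
        calc |g p.2 * f (p.1 - p.2) * h p.1| ≤ |g p.2| * C * |h p.1| := by
              rw [abs_mul, abs_mul]
              gcongr
          _ = C * (|h p.1| * |g p.2|) := by ring
      · rw [abs_zero]
        positivity
  have houter : ∀ σ ∈ Ioi (0 : ℝ),
      ∫ t in Ioi 0, F (t, σ) = g σ * ∫ τ in Ioi 0, f τ * h (σ + τ) := by
    intro σ hσ
    have hslice : ∀ t, F (t, σ) = (Ioi σ).indicator (fun t => g σ * f (t - σ) * h t) t :=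
      fun t => by simp [F, indicator_apply]
    simp_rw [hslice]
    rw [setIntegral_indicator measurableSet_Ioi, Ioi_inter_Ioi, max_eq_right (le_of_lt hσ),
      setIntegral_Ioi_eq_integral_comp_add, ← integral_const_mul]
    simp only [add_sub_cancel_left, mul_assoc]
  rw [setIntegral_congr_fun measurableSet_Ioi hinner,
    integral_integral_swap (f := fun t σ => F (t, σ)) hF,
    setIntegral_congr_fun measurableSet_Ioi houter]

lemma integral_mul_laguerreFunDot {g : ℝ → ℝ} (hg : IntegrableOn g (Ioi 0)) (m : ℕ) :
    ∫ t in Ioi 0, g t * laguerreFunDot m t = laguerreCoefDot g m := by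
  cases m with
  | zero => rfl
  | succ m =>
    simp only [laguerreFunDot_succ, mul_sub]
    exact integral_sub ((expDecay_laguerreFun' (m + 1)).integrableOn_mul_left hg)
      ((expDecay_laguerreFun' m).integrableOn_mul_left hg)

theorem galerkin_matrix_lower_triangular_toeplitz_general
    (g : ℝ → ℝ) (hg1 : IntegrableOn g (Set.Ioi 0))
    (ℓ : ℕ) (i j : Fin (ℓ + 1)) :
    (∫ t in Set.Ioi (0:ℝ),
        (∫ τ in (0:ℝ)..t, g (t - τ) * laguerreFun' (j : ℕ) τ) * laguerreFun' (i : ℕ) t)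
      = if (i : ℕ) < (j : ℕ) then 0 else laguerreCoefDot g ((i : ℕ) - (j : ℕ)) := by
  obtain ⟨C, hC⟩ := (expDecay_laguerreFun' j).exists_abs_le
  rw [integral_volterra_mul hg1 (continuous_laguerreFun' j).measurable hC
    (expDecay_laguerreFun' i).integrableOn,
    setIntegral_congr_fun measurableSet_Ioi fun σ hσ => by
    rw [integral_laguerreFun'_mul_comp_add i j (le_of_lt hσ)]]
  by_cases hij : (i : ℕ) < j
  · simp [hij]
  · simpa [hij] using integral_mul_laguerreFunDot hg1 (i - j)

/-- For `g ∈ L¹(ℝ₊) ∩ L²(ℝ₊)` and `K` the Volterra convolution operator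
`(K f)(t) = ∫₀ᵗ g(t−τ) f(τ) dτ`, the Galerkin matrix of `K` in the Laguerre basis is lower
triangular Toeplitz, with entries `⟨K φ_j, φ_i⟩ = ǧ̇_{i−j}` for `i ≥ j` and `0` for `i < j`. -/
theorem galerkin_matrix_lower_triangular_toeplitz
    (g : ℝ → ℝ) (hg1 : IntegrableOn g (Set.Ioi 0))
    (hg2 : MemLp g 2 (volume.restrict (Set.Ioi 0)))
    (ℓ : ℕ) (i j : Fin (ℓ + 1)) :
    (∫ t in Set.Ioi (0:ℝ),
        (∫ τ in (0:ℝ)..t, g (t - τ) * laguerreFun' (j : ℕ) τ) * laguerreFun' (i : ℕ) t)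
      = if (i : ℕ) < (j : ℕ) then 0 else laguerreCoefDot g ((i : ℕ) - (j : ℕ)) :=
  galerkin_matrix_lower_triangular_toeplitz_general g hg1 ℓ i j
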